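/- For a ∈ ℂ with a ≠ 0, let ν_a := (1/2) Σ_{k=0}^∞ 2^{−k} δ_{a^{−k}}, a Borel probability measure on ℂ (δ_x denotes the Dirac mass at x). Then ν_a({z}) ≤ 1/2 for every z ∈ ℂ if and only if a is not a root of unity (i.e. a^q ≠ 1 for every integer q ≥ 1). -/

import Mathlib

/-!
The atom of `ν_a` at `z` is the total weight of the indices `k` with `a^{-k} = z`. The weight
of `k = 0` alone is already `1/2`, so if `a^q = 1` with `q ≥ 1` the atom at `1` also collects
the positive weight of `k = q`. If `a` is not a root of unity, the points `a^{-k}` are pairwise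
distinct and every atom is a single weight `2^{-k-1} ≤ 1/2`.
-/

noncomputable section

open MeasureTheory
open scoped ENNReal

/-- The measure `ν_a = (1/2) ∑_{k≥0} 2^{-k} δ_{a^{-k}}` on `ℂ`, the measure of maximal
entropy of the degenerate quadratic boundary point `Λ_a`. -/
def nuMeasure (a : ℂ) : Measure ℂ :=
  Measure.sum fun k : ℕ =>
    ((1 / 2 : ℝ≥0∞) * (1 / 2) ^ k) • Measure.dirac (a ^ (-(k : ℤ)))

namespace MeasureTheory.Measure

variable {α ι : Type*} [MeasurableSpace α] [MeasurableSingletonClass α]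

theorem sum_smul_dirac_apply_singleton (w : ι → ℝ≥0∞) (x : ι → α) (z : α) :
    sum (fun i => w i • dirac (x i)) {z} = ∑' i, {i | x i = z}.indicator w i := by
  rw [sum_apply _ (measurableSet_singleton z)]
  refine tsum_congr fun i => ?_
  by_cases h : x i = z <;> simp [h]

theorem add_le_sum_smul_dirac_singleton (w : ι → ℝ≥0∞) {x : ι → α} {i j : ι} (hij : i ≠ j)
    (hx : x i = x j) : w i + w j ≤ sum (fun i => w i • dirac (x i)) {x i} := by
  classical
  rw [sum_smul_dirac_apply_singleton]
  calc w i + w j = ∑ k ∈ {i, j}, {k | x k = x i}.indicator w k := by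
        simp [Finset.sum_pair hij, hx]
    _ ≤ _ := ENNReal.sum_le_tsum _

theorem sum_smul_dirac_singleton_le {w : ι → ℝ≥0∞} {x : ι → α} {c : ℝ≥0∞}
    (hx : Function.Injective x) (hw : ∀ i, w i ≤ c) (z : α) :
    sum (fun i => w i • dirac (x i)) {z} ≤ c := by
  rw [sum_smul_dirac_apply_singleton]
  by_cases hz : ∃ i, x i = z
  · obtain ⟨i, rfl⟩ := hz
    rw [tsum_eq_single i fun j hj =>
      Set.indicator_of_notMem (s := {k | x k = x i}) (hx.ne hj) w]
    exact (Set.indicator_le_self _ w i).trans (hw i)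
  · push Not at hz
    simp [hz]

end MeasureTheory.Measure

theorem injective_zpow_neg_natCast {G : Type*} [GroupWithZero G] {a : G} (ha : a ≠ 0)
    (h : ¬IsOfFinOrder a) : Function.Injective fun k : ℕ => a ^ (-(k : ℤ)) := by
  set u := Units.mk0 a ha
  have hu : Function.Injective fun k : ℕ => u ^ k :=
    injective_pow_iff_not_isOfFinOrder.2 (Units.isOfFinOrder_val.not.1 h)
  convert Units.val_injective.comp (inv_injective.comp hu) using 1
  ext k
  simp [u, zpow_neg]

/-- For `a ≠ 0`, every atom of `ν_a = (1/2) ∑_{k≥0} 2^{-k} δ_{a^{-k}}` has mass at most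
`1/2` if and only if `a` is not a root of unity. -/
theorem nuMeasure_atoms_le_half_iff (a : ℂ) (ha : a ≠ 0) :
    (∀ z : ℂ, nuMeasure a {z} ≤ 1 / 2) ↔ ∀ q : ℕ, 1 ≤ q → a ^ q ≠ 1 := by
  have hfinOrder : (∀ q : ℕ, 1 ≤ q → a ^ q ≠ 1) ↔ ¬IsOfFinOrder a := by
    simp only [isOfFinOrder_iff_pow_eq_one, Nat.one_le_iff_ne_zero, pos_iff_ne_zero]
    grind
  rw [hfinOrder]
  constructor
  · intro h hfin
    have hn := hfin.orderOf_pos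
    have hcoinc : a ^ (-((0 : ℕ) : ℤ)) = a ^ (-(orderOf a : ℤ)) := by
      simp [zpow_neg, pow_orderOf_eq_one]
    have hle : (1 / 2 : ℝ≥0∞) * (1 / 2) ^ 0 + 1 / 2 * (1 / 2) ^ orderOf a
        ≤ nuMeasure a {a ^ (-((0 : ℕ) : ℤ))} :=
      Measure.add_le_sum_smul_dirac_singleton (fun k : ℕ => (1 / 2 : ℝ≥0∞) * (1 / 2) ^ k)
        (x := fun k : ℕ => a ^ (-(k : ℤ))) hn.ne hcoinc
    rw [pow_zero, mul_one] at hle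
    exact (ENNReal.lt_add_right (by simp) (by simp)).not_ge (hle.trans (h _))
  · intro h
    exact Measure.sum_smul_dirac_singleton_le (injective_zpow_neg_natCast ha h)
      fun k => mul_le_of_le_one_right' (pow_le_one₀ (by simp) (by norm_num))
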